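/- Let N = binom(n+d, d) and let ν_{n,d}: ℝPⁿ → ℝP^{N−1} be the Kostlan–Veronese embedding, defined in homogeneous coordinates by [x] ↦ [ (d!/(α₀!⋯α_n!))^{1/2} x₀^{α₀}⋯x_n^{α_n} ]_{|α|=d}. Then ν_{n,d} is a metric dilation of factor d^{1/2}: for every point [x] ∈ ℝPⁿ and every tangent vector v at [x], the differential satisfies ‖D_{[x]}ν_{n,d}(v)‖ = d^{1/2}‖v‖. In particular, for every submanifold Z ⊂ ℝPⁿ of dimension m one has vol(ν_{n,d}(Z)) = d^{m/2}·vol(Z). -/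

import Mathlib

set_option synthInstance.maxHeartbeats 1000000
set_option maxHeartbeats 1000000


open MeasureTheory Finset
open scoped ENNReal NNReal

noncomputable section

/-- The Bombieri–Weyl/Kostlan coefficient `√(d!/(α₀!⋯αₙ!))`. -/
def kCoeff (d : ℕ) {m : ℕ} (α : Fin m → ℕ) : ℝ :=
  Real.sqrt ((d.factorial : ℝ) / ∏ i, ((α i).factorial : ℝ))

/-- Multi-indices of total degree `d` in `m` variables. -/
abbrev kIdx (m d : ℕ) := ↥(Finset.Nat.antidiagonalTuple m d)

/-- The (lift of the) Kostlan–Veronese embedding: `x ↦ (√(d!/α!) x^α)_{|α|=d}`.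
It maps the unit sphere of `ℝ^{n+1}` to the unit sphere of `ℝ^N`, `N = (n+d choose d)`,
and descends to the embedding `ν_{n,d} : ℝPⁿ → ℝP^{N-1}`. -/
def vMap (n d : ℕ) (x : EuclideanSpace ℝ (Fin (n + 1))) : EuclideanSpace ℝ (kIdx (n + 1) d) :=
  WithLp.toLp 2 fun α => kCoeff d α.1 * ∏ i, x i ^ α.1 i

/-- The rank-one projection `x xᵀ`, realizing the projective point `[x]` as a point of a
Euclidean matrix space. -/
def outer {ι : Type*} [Fintype ι] (x : EuclideanSpace ℝ ι) : EuclideanSpace ℝ (ι × ι) :=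
  WithLp.toLp 2 fun p => x p.1 * x p.2

/-- Real projective space of a Euclidean space, realized as its set of rank-one
orthogonal projections.  This realization rescales the quotient Riemannian metric by the
constant factor `√2`, so every identity between volumes of equal dimension, and every
statement about dilations, holds verbatim in this model. -/
def RPE (ι : Type*) [Fintype ι] : Set (EuclideanSpace ℝ (ι × ι)) :=
  {M | ∃ x : EuclideanSpace ℝ ι, ‖x‖ = 1 ∧ M = outer x}

/-- `S` is a smooth (`C^∞`) submanifold of dimension `m` of the real normed space `E`. -/
def IsSubmanifoldDim {E : Type*} [NormedAddCommGroup E] [NormedSpace ℝ E]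
    (S : Set E) (m : ℕ) : Prop :=
  ∀ x ∈ S, ∃ (U : Set E) (V : Set (EuclideanSpace ℝ (Fin m)))
      (f : EuclideanSpace ℝ (Fin m) → E) (g : E → EuclideanSpace ℝ (Fin m)),
    IsOpen U ∧ x ∈ U ∧ IsOpen V ∧ ContDiffOn ℝ (⊤ : ℕ∞) f V ∧
    (∀ y ∈ V, Function.Injective (fderiv ℝ f y)) ∧
    S ∩ U = f '' V ∧ ContinuousOn g (S ∩ U) ∧ ∀ y ∈ V, g (f y) = y

/-- The image under the Kostlan–Veronese embedding of a subset `Z ⊆ ℝPⁿ`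
(in the projection models of both projective spaces). -/
def vImage (n d : ℕ) (Z : Set (EuclideanSpace ℝ (Fin (n + 1) × Fin (n + 1)))) :
    Set (EuclideanSpace ℝ (kIdx (n + 1) d × kIdx (n + 1) d)) :=
  {M | ∃ x : EuclideanSpace ℝ (Fin (n + 1)), ‖x‖ = 1 ∧ outer x ∈ Z ∧ M = outer (vMap n d x)}

lemma kCoeff_sq {d m : ℕ} {α : Fin m → ℕ} (h : ∑ i, α i = d) :
    kCoeff d α ^ 2 = (Nat.multinomial Finset.univ α : ℝ) := by
  have hprod : (0:ℝ) < ∏ i, ((α i).factorial : ℝ) := by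
    apply Finset.prod_pos; intro i _; exact_mod_cast (α i).factorial_pos
  have hnn : (0:ℝ) ≤ (d.factorial : ℝ) / ∏ i, ((α i).factorial : ℝ) := by positivity
  rw [kCoeff, Real.sq_sqrt hnn]
  have hspec := Nat.multinomial_spec Finset.univ α
  rw [h] at hspec
  have : ((∏ i, ((α i).factorial) : ℕ) : ℝ) * (Nat.multinomial Finset.univ α : ℝ)
      = (d.factorial : ℝ) := by exact_mod_cast congrArg (Nat.cast (R := ℝ)) hspec
  push_cast at this
  field_simp
  linarith [this]

/-- Key identity: the Kostlan map turns inner products into `d`-th powers. -/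
lemma vMap_inner (n d : ℕ) (x y : EuclideanSpace ℝ (Fin (n + 1))) :
    (∑ α : kIdx (n+1) d, vMap n d x α * vMap n d y α) = (∑ i, x i * y i) ^ d := by
  rw [Finset.sum_pow_eq_sum_piAntidiag Finset.univ (fun i => x i * y i) d,
    Finset.piAntidiag_univ_fin_eq_antidiagonalTuple d (n+1)]
  rw [← Finset.sum_coe_sort (Finset.Nat.antidiagonalTuple (n+1) d)]
  apply Finset.sum_congr rfl
  intro α _
  have hα : ∑ i, α.1 i = d := (Finset.Nat.mem_antidiagonalTuple.mp α.2)
  simp only [vMap]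
  rw [show (kCoeff d α.1 * ∏ i, x i ^ α.1 i) * (kCoeff d α.1 * ∏ i, y i ^ α.1 i)
      = kCoeff d α.1 ^ 2 * ((∏ i, x i ^ α.1 i) * ∏ i, y i ^ α.1 i) by ring,
    kCoeff_sq hα, ← Finset.prod_mul_distrib]
  congr 1
  exact Finset.prod_congr rfl fun i _ => (mul_pow _ _ _).symm

/-- Key identity: the Kostlan map turns inner products into `d`-th powers. -/
lemma vMap_differentiable (n d : ℕ) : Differentiable ℝ (vMap n d) := by
  intro x
  have : vMap n d = ⇑(PiLp.continuousLinearEquiv 2 ℝ (fun _ : kIdx (n+1) d => ℝ)).symm ∘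
      (fun x => fun α : kIdx (n+1) d => kCoeff d α.1 * ∏ i, x i ^ α.1 i) := rfl
  rw [this]
  have hg : DifferentiableAt ℝ
      (fun x : EuclideanSpace ℝ (Fin (n+1)) => fun α : kIdx (n+1) d => kCoeff d α.1 * ∏ i, x i ^ α.1 i) x := by
    apply differentiableAt_pi.2
    intro α
    apply DifferentiableAt.const_mul
    have : ∀ i ∈ Finset.univ, HasFDerivAt (fun y : EuclideanSpace ℝ (Fin (n+1)) => y i ^ α.1 i)
        (fderiv ℝ (fun y : EuclideanSpace ℝ (Fin (n+1)) => y i ^ α.1 i) x) x := by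
      intro i _
      exact (((EuclideanSpace.proj (𝕜 := ℝ) i).differentiableAt).pow _).hasFDerivAt
    exact (HasFDerivAt.finset_prod this).differentiableAt
  exact ((PiLp.continuousLinearEquiv 2 ℝ (fun _ : kIdx (n+1) d => ℝ)).symm.differentiableAt).comp x hg

section Geom
variable {ι : Type*} [Fintype ι]

lemma sum_self_eq_norm (w : EuclideanSpace ℝ ι) :
    Real.sqrt (∑ i, w i * w i) = ‖w‖ := by
  rw [EuclideanSpace.norm_eq]
  congr 1
  exact Finset.sum_congr rfl fun i _ => by rw [Real.norm_eq_abs, sq_abs, sq]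

lemma normsq_eq_sum (w : EuclideanSpace ℝ ι) : ‖w‖ ^ 2 = ∑ i, w i * w i := by
  rw [← sum_self_eq_norm w, Real.sq_sqrt (Finset.sum_nonneg fun i _ => mul_self_nonneg _)]

lemma sum_self_one (w : EuclideanSpace ℝ ι) (hw : ‖w‖ = 1) : (∑ i, w i * w i) = 1 := by
  rw [← normsq_eq_sum, hw, one_pow]

lemma prod_sum (a b : ι → ℝ) : (∑ p : ι × ι, a p.1 * b p.2) = (∑ i, a i) * (∑ i, b i) := by
  rw [Fintype.sum_prod_type, Finset.sum_mul]
  exact Finset.sum_congr rfl fun i _ => by rw [Finset.mul_sum]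

lemma outer_sub_normsq (u v : EuclideanSpace ℝ ι) (hu : ‖u‖ = 1) (hv : ‖v‖ = 1) :
    ‖outer u - outer v‖ ^ 2 = 2 - 2 * (∑ i, u i * v i) ^ 2 := by
  rw [normsq_eq_sum]
  have happ : ∀ p : ι × ι, (outer u - outer v) p = u p.1 * u p.2 - v p.1 * v p.2 := fun p => rfl
  calc (∑ p : ι × ι, (outer u - outer v) p * (outer u - outer v) p)
      = ∑ p : ι × ι, ((u p.1 * u p.1) * (u p.2 * u p.2)
          - 2 * ((u p.1 * v p.1) * (u p.2 * v p.2)) + (v p.1 * v p.1) * (v p.2 * v p.2)) := by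
        refine Finset.sum_congr rfl fun p _ => by rw [happ]; ring
    _ = (∑ p : ι × ι, (u p.1 * u p.1) * (u p.2 * u p.2))
          - 2 * (∑ p : ι × ι, (u p.1 * v p.1) * (u p.2 * v p.2))
          + (∑ p : ι × ι, (v p.1 * v p.1) * (v p.2 * v p.2)) := by
        rw [Finset.sum_add_distrib, Finset.sum_sub_distrib, Finset.mul_sum]
    _ = (∑ i, u i * u i) * (∑ i, u i * u i) - 2 * ((∑ i, u i * v i) * (∑ i, u i * v i))
          + (∑ i, v i * v i) * (∑ i, v i * v i) := by
        rw [prod_sum (fun i => u i * u i) (fun i => u i * u i),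
          prod_sum (fun i => u i * v i) (fun i => u i * v i),
          prod_sum (fun i => v i * v i) (fun i => v i * v i)]
    _ = 2 - 2 * (∑ i, u i * v i) ^ 2 := by rw [sum_self_one u hu, sum_self_one v hv]; ring

end Geom

lemma vMap_norm_one (n d : ℕ) (x : EuclideanSpace ℝ (Fin (n+1))) (hx : ‖x‖ = 1) :
    ‖vMap n d x‖ = 1 := by
  rw [← sum_self_eq_norm, vMap_inner, sum_self_one x hx, one_pow, Real.sqrt_one]

lemma outer_vMap_congr (n d : ℕ) {u v : EuclideanSpace ℝ (Fin (n+1))}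
    (hu : ‖u‖ = 1) (hv : ‖v‖ = 1) (h : outer u = outer v) :
    outer (vMap n d u) = outer (vMap n d v) := by
  have happ : ∀ i j, u i * u j = v i * v j := fun i j => congrArg (fun M : EuclideanSpace ℝ (Fin (n+1) × Fin (n+1)) => M (i, j)) h
  have ht2 : (∑ i, u i * v i) * (∑ i, u i * v i) = 1 := by
    rw [← prod_sum (fun i => u i * v i) (fun i => u i * v i)]
    have : ∀ p : Fin (n+1) × Fin (n+1),
        (u p.1 * v p.1) * (u p.2 * v p.2) = (v p.1 * v p.1) * (v p.2 * v p.2) := by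
      intro p
      rw [show (u p.1 * v p.1) * (u p.2 * v p.2) = (u p.1 * u p.2) * (v p.1 * v p.2) by ring,
        happ]
      ring
    rw [Finset.sum_congr rfl fun p _ => this p,
      prod_sum (fun i => v i * v i) (fun i => v i * v i), sum_self_one v hv, one_mul]
  rcases mul_self_eq_one_iff.mp ht2 with ht | ht
  · -- u = v
    have : ‖u - v‖ = 0 := by
      rw [← sum_self_eq_norm]
      have : (∑ i, (u - v) i * (u - v) i) = 0 := by
        have expand : ∀ i, (u - v) i * (u - v) i = u i * u i - 2 * (u i * v i) + v i * v i := by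
          intro i
          have : (u - v) i = u i - v i := rfl
          rw [this]; ring
        rw [Finset.sum_congr rfl fun i _ => expand i, Finset.sum_add_distrib,
          Finset.sum_sub_distrib, ← Finset.mul_sum, sum_self_one u hu, sum_self_one v hv, ht]
        ring
      rw [this, Real.sqrt_zero]
    have huv : u = v := by
      have := norm_eq_zero.mp this
      rwa [sub_eq_zero] at this
    rw [huv]
  · -- u = -v
    have : ‖u + v‖ = 0 := by
      rw [← sum_self_eq_norm]
      have : (∑ i, (u + v) i * (u + v) i) = 0 := by
        have expand : ∀ i, (u + v) i * (u + v) i = u i * u i + 2 * (u i * v i) + v i * v i := by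
          intro i
          have : (u + v) i = u i + v i := rfl
          rw [this]; ring
        rw [Finset.sum_congr rfl fun i _ => expand i, Finset.sum_add_distrib,
          Finset.sum_add_distrib, ← Finset.mul_sum, sum_self_one u hu, sum_self_one v hv, ht]
        ring
      rw [this, Real.sqrt_zero]
    have huv : u = -v := by
      have := norm_eq_zero.mp this
      rw [add_eq_zero_iff_eq_neg] at this
      exact this
    subst huv
    have hneg : ∀ α : kIdx (n+1) d, vMap n d (-v) α = (-1 : ℝ) ^ d * vMap n d v α := by
      intro α
      have hα : ∑ i, α.1 i = d := Finset.Nat.mem_antidiagonalTuple.mp α.2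
      show kCoeff d α.1 * ∏ i, (-v) i ^ α.1 i = (-1:ℝ)^d * (kCoeff d α.1 * ∏ i, v i ^ α.1 i)
      have : ∀ i, ((-v) i : ℝ) ^ α.1 i = (-1:ℝ) ^ α.1 i * v i ^ α.1 i := by
        intro i
        have : (-v) i = -(v i) := rfl
        rw [this, neg_pow]
      rw [Finset.prod_congr rfl fun i _ => this i, Finset.prod_mul_distrib,
        Finset.prod_pow_eq_pow_sum, hα]
      ring
    ext p
    show vMap n d (-v) p.1 * vMap n d (-v) p.2 = vMap n d v p.1 * vMap n d v p.2
    rw [hneg p.1, hneg p.2]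
    have : ((-1:ℝ)^d) * ((-1:ℝ)^d) = 1 := by
      rw [← pow_add, ← two_mul, pow_mul, neg_one_sq, one_pow]
    calc ((-1:ℝ)^d * vMap n d v p.1) * ((-1:ℝ)^d * vMap n d v p.2)
        = (((-1:ℝ)^d) * ((-1:ℝ)^d)) * (vMap n d v p.1 * vMap n d v p.2) := by ring
      _ = vMap n d v p.1 * vMap n d v p.2 := by rw [this, one_mul]

open Classical in
def kvPhi (n d : ℕ) (M : EuclideanSpace ℝ (Fin (n+1) × Fin (n+1))) :
    EuclideanSpace ℝ (kIdx (n+1) d × kIdx (n+1) d) :=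
  if h : M ∈ RPE (Fin (n+1)) then outer (vMap n d h.choose) else 0

lemma kvPhi_outer (n d : ℕ) {x : EuclideanSpace ℝ (Fin (n+1))} (hx : ‖x‖ = 1) :
    kvPhi n d (outer x) = outer (vMap n d x) := by
  have hM : outer x ∈ RPE (Fin (n+1)) := ⟨x, hx, rfl⟩
  rw [kvPhi, dif_pos hM]
  exact outer_vMap_congr n d hM.choose_spec.1 hx hM.choose_spec.2.symm

/-- Bernoulli-type upper bound: `1 - s^d ≤ d (1 - s)` on `[0,1]`. -/
lemma one_sub_pow_le (d : ℕ) {s : ℝ} (hs : -1 ≤ s) : 1 - s ^ d ≤ d * (1 - s) := by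
  have h := one_add_mul_le_pow (a := s - 1) (by linarith) d
  have : 1 + (d:ℝ) * (s - 1) ≤ s ^ d := by
    simpa using h
  nlinarith

/-- Geometric-sum lower bound: `d θ^(d-1) (1-s) ≤ 1 - s^d` for `0 ≤ θ ≤ s ≤ 1`. -/
lemma one_sub_pow_ge (d : ℕ) (hd : 1 ≤ d) {θ s : ℝ} (hθ0 : 0 ≤ θ) (hθs : θ ≤ s) (hs1 : s ≤ 1) :
    (d : ℝ) * θ ^ (d - 1) * (1 - s) ≤ 1 - s ^ d := by
  have hs0 : 0 ≤ s := le_trans hθ0 hθs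
  have hgeom : 1 - s ^ d = (1 - s) * ∑ i ∈ Finset.range d, s ^ i := by
    have := geom_sum_mul (x := s) (n := d)
    nlinarith [this]
  rw [hgeom]
  have hterm : ∀ i ∈ Finset.range d, θ ^ (d-1) ≤ s ^ i := by
    intro i hi
    have hii : i ≤ d - 1 := Nat.le_sub_one_of_lt (Finset.mem_range.mp hi)
    calc θ ^ (d-1) ≤ s ^ (d-1) := pow_le_pow_left₀ hθ0 hθs _
      _ ≤ s ^ i := pow_le_pow_of_le_one hs0 hs1 hii
  have hsum : (d : ℝ) * θ ^ (d-1) ≤ ∑ i ∈ Finset.range d, s ^ i := by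
    calc (d : ℝ) * θ ^ (d-1) = ∑ _i ∈ Finset.range d, θ ^ (d-1) := by
          rw [Finset.sum_const, Finset.card_range, nsmul_eq_mul]
      _ ≤ ∑ i ∈ Finset.range d, s ^ i := Finset.sum_le_sum hterm
  have h1s : 0 ≤ 1 - s := by linarith
  calc (d : ℝ) * θ ^ (d-1) * (1 - s) = (1 - s) * ((d:ℝ) * θ ^ (d-1)) := by ring
    _ ≤ (1 - s) * ∑ i ∈ Finset.range d, s ^ i := by
        exact mul_le_mul_of_nonneg_left hsum h1s

section DistBounds
variable (n d : ℕ)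

/-- Distances between points of `RPE` and their `kvPhi`-images, in terms of `s = ⟨x,y⟩²`. -/
lemma kvPhi_dist_formula {M M' : EuclideanSpace ℝ (Fin (n+1) × Fin (n+1))}
    (hM : M ∈ RPE (Fin (n+1))) (hM' : M' ∈ RPE (Fin (n+1))) :
    ∃ s : ℝ, 0 ≤ s ∧ s ≤ 1 ∧ dist M M' ^ 2 = 2 - 2 * s ∧
      dist (kvPhi n d M) (kvPhi n d M') ^ 2 = 2 - 2 * s ^ d := by
  obtain ⟨x, hx, rfl⟩ := hM
  obtain ⟨y, hy, rfl⟩ := hM'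
  refine ⟨(∑ i, x i * y i) ^ 2, sq_nonneg _, ?_, ?_, ?_⟩
  · -- s ≤ 1 from Cauchy-Schwarz via 2 - 2s = ‖·‖² ≥ 0... use norm ≥ 0
    have h := outer_sub_normsq x y hx hy
    nlinarith [sq_nonneg ‖outer x - outer y‖]
  · rw [dist_eq_norm, outer_sub_normsq x y hx hy]
  · rw [dist_eq_norm, kvPhi_outer n d hx, kvPhi_outer n d hy,
      outer_sub_normsq (vMap n d x) (vMap n d y) (vMap_norm_one n d x hx) (vMap_norm_one n d y hy),
      vMap_inner, ← pow_mul, mul_comm d 2, pow_mul]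

lemma kvPhi_lipschitzOnWith (hd : 1 ≤ d) :
    LipschitzOnWith (Real.toNNReal (Real.sqrt d)) (kvPhi n d) (RPE (Fin (n+1))) := by
  apply LipschitzOnWith.of_dist_le_mul
  intro M hM M' hM'
  obtain ⟨s, hs0, hs1, hMM, hPP⟩ := kvPhi_dist_formula n d hM hM'
  have hsq : dist (kvPhi n d M) (kvPhi n d M') ^ 2 ≤ (Real.sqrt d * dist M M') ^ 2 := by
    rw [hPP, mul_pow, Real.sq_sqrt (by positivity), hMM]
    have := one_sub_pow_le d (s := s) (by linarith)
    nlinarith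
  have h1 : (0:ℝ) ≤ Real.sqrt d * dist M M' := by positivity
  have h2 := (pow_le_pow_iff_left₀ dist_nonneg h1 two_ne_zero).mp hsq
  rwa [Real.coe_toNNReal _ (Real.sqrt_nonneg _)]

lemma kvPhi_injOn (hd : 1 ≤ d) : Set.InjOn (kvPhi n d) (RPE (Fin (n+1))) := by
  intro M hM M' hM' h
  obtain ⟨s, hs0, hs1, hMM, hPP⟩ := kvPhi_dist_formula n d hM hM'
  rw [h, dist_self] at hPP
  norm_num at hPP
  have hsd : s ^ d = 1 := by linarith
  have hs : s = 1 := by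
    by_contra hne
    have hlt : s < 1 := lt_of_le_of_ne hs1 hne
    have hd0 : d ≠ 0 := by omega
    have := pow_lt_one₀ hs0 hlt hd0
    nlinarith
  have : dist M M' ^ 2 = 0 := by rw [hMM, hs]; ring
  have : dist M M' = 0 := by nlinarith [dist_nonneg (x := M) (y := M')]
  exact dist_eq_zero.mp this

lemma kvPhi_lower (hd : 1 ≤ d) {θ : ℝ} (hθ0 : 0 < θ) (hθ1 : θ < 1)
    {M M' : EuclideanSpace ℝ (Fin (n+1) × Fin (n+1))}
    (hM : M ∈ RPE (Fin (n+1))) (hM' : M' ∈ RPE (Fin (n+1)))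
    (hclose : dist M M' ^ 2 ≤ 2 * (1 - θ)) :
    dist M M' ≤ (Real.sqrt ((d:ℝ) * θ ^ (d-1)))⁻¹ * dist (kvPhi n d M) (kvPhi n d M') := by
  obtain ⟨s, hs0, hs1, hMM, hPP⟩ := kvPhi_dist_formula n d hM hM'
  have hθs : θ ≤ s := by rw [hMM] at hclose; linarith
  have hq : (0:ℝ) < Real.sqrt ((d:ℝ) * θ ^ (d-1)) := Real.sqrt_pos.mpr (by positivity)
  rw [inv_mul_eq_div, le_div_iff₀ hq]
  have h1 : (0:ℝ) ≤ dist M M' * Real.sqrt ((d:ℝ) * θ ^ (d-1)) := by positivity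
  apply (pow_le_pow_iff_left₀ h1 dist_nonneg two_ne_zero).mp
  rw [mul_pow, Real.sq_sqrt (by positivity), hPP, hMM]
  have := one_sub_pow_ge d hd (le_of_lt hθ0) hθs hs1
  nlinarith

section Meas

/-- Open subsets of a proper metric space are σ-compact. -/
lemma IsOpen.isSigmaCompact' {X : Type*} [MetricSpace X] [ProperSpace X] [Nonempty X]
    {V : Set X} (hV : IsOpen V) : IsSigmaCompact V := by
  obtain ⟨x₀⟩ := ‹Nonempty X›
  set K : ℕ → Set X := fun j =>
    (Metric.closedBall x₀ j) ∩ (⋂ y ∈ Vᶜ, {x | 1/((j:ℝ)+1) ≤ dist x y}) with hK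
  have hcl : ∀ j, IsClosed (⋂ y ∈ Vᶜ, {x : X | 1/((j:ℝ)+1) ≤ dist x y}) := by
    intro j
    apply isClosed_biInter
    intro y _
    exact isClosed_le continuous_const (Continuous.dist continuous_id continuous_const)
  have hcomp : ∀ j, IsCompact (K j) :=
    fun j => (isCompact_closedBall x₀ j).inter_right (hcl j)
  refine ⟨K, hcomp, ?_⟩
  apply Set.eq_of_subset_of_subset
  · rintro x ⟨j, hj⟩
    simp only [Set.mem_range] at hj
    obtain ⟨j, rfl⟩ := hj.1
    obtain ⟨-, hx2⟩ := hj.2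
    by_contra hxV
    have : (1:ℝ)/((j:ℝ)+1) ≤ dist x x := by
      have := Set.mem_iInter₂.mp hx2 x hxV
      exact this
    rw [dist_self] at this
    have : (0:ℝ) < 1/((j:ℝ)+1) := by positivity
    linarith
  · intro x hx
    obtain ⟨ε, hε, hball⟩ := Metric.isOpen_iff.mp hV x hx
    obtain ⟨j, hj⟩ := exists_nat_ge (max (dist x x₀) (1/ε))
    refine Set.mem_iUnion.mpr ⟨j, ⟨?_, ?_⟩⟩
    · exact Metric.mem_closedBall.mpr (le_trans (le_max_left _ _) hj)
    · apply Set.mem_iInter₂.mpr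
      intro y hy
      have hεd : ε ≤ dist x y := by
        by_contra hlt
        push_neg at hlt
        exact hy (hball (Metric.mem_ball.mpr (by rwa [dist_comm])))
      have h1 : 1/ε ≤ (j:ℝ) + 1 := le_trans (le_trans (le_max_right _ _) hj) (by linarith)
      have : 1/((j:ℝ)+1) ≤ 1/(1/ε) := by
        apply one_div_le_one_div_of_le (by positivity) h1
      rw [one_div_one_div] at this
      exact le_trans this hεd

lemma IsSigmaCompact.measurableSet' {X : Type*} [TopologicalSpace X] [T2Space X]
    [MeasurableSpace X] [OpensMeasurableSpace X] {s : Set X} (h : IsSigmaCompact s) :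
    MeasurableSet s := by
  obtain ⟨K, hc, rfl⟩ := h
  exact MeasurableSet.iUnion fun n => (hc n).isClosed.measurableSet

/-- A submanifold (in the chart sense used here) of a Euclidean space is σ-compact. -/
lemma isSigmaCompact_of_submanifold {E : Type*} [NormedAddCommGroup E] [NormedSpace ℝ E]
    [SecondCountableTopology E] {Z : Set E} {m : ℕ}
    (h : ∀ x ∈ Z, ∃ (U : Set E) (V : Set (EuclideanSpace ℝ (Fin m)))
      (f : EuclideanSpace ℝ (Fin m) → E)
      (g : E → EuclideanSpace ℝ (Fin m)),
    IsOpen U ∧ x ∈ U ∧ IsOpen V ∧ ContDiffOn ℝ (⊤ : ℕ∞) f V ∧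
    (∀ y ∈ V, Function.Injective (fderiv ℝ f y)) ∧
    Z ∩ U = f '' V ∧ ContinuousOn g (Z ∩ U) ∧ ∀ y ∈ V, g (f y) = y) :
    IsSigmaCompact Z := by
  choose U V f g hUopen hxU hVopen hf _hinj hZU _hg _hgf using h
  have hl : IsLindelof Z := HereditarilyLindelof_LindelofSets Z
  obtain ⟨t, htc, hcover⟩ := hl.elim_nhds_subcover'
    (fun x hx => U x hx) (fun x hx => (hUopen x hx).mem_nhds (hxU x hx))
  haveI : Countable t := htc.to_subtype
  have hZ : Z = ⋃ x : t, (Z ∩ U x.1.1 x.1.2) := by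
    apply Set.eq_of_subset_of_subset
    · intro z hz
      obtain ⟨x, hx⟩ := Set.mem_iUnion₂.mp (hcover hz)
      exact Set.mem_iUnion.mpr ⟨⟨x, hx.1⟩, hz, hx.2⟩
    · exact Set.iUnion_subset fun x => Set.inter_subset_left
  rw [hZ]
  apply isSigmaCompact_iUnion
  intro x
  rw [hZU x.1.1 x.1.2]
  exact ((hVopen x.1.1 x.1.2).isSigmaCompact').image_of_continuousOn
    ((hf x.1.1 x.1.2).continuousOn)

/-- A countable Borel partition of a separable metric space into pieces of diameter `≤ r`. -/
lemma exists_partition {X : Type*} [MetricSpace X] [TopologicalSpace.SeparableSpace X]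
    [Nonempty X] [MeasurableSpace X] [OpensMeasurableSpace X] {r : ℝ} (hr : 0 < r) :
    ∃ Q : ℕ → Set X, (∀ j, MeasurableSet (Q j)) ∧ Pairwise (Function.onFun Disjoint Q) ∧
      (⋃ j, Q j) = Set.univ ∧ ∀ j, ∀ a ∈ Q j, ∀ b ∈ Q j, dist a b ≤ r := by
  set u := TopologicalSpace.denseSeq X
  set B : ℕ → Set X := fun j => Metric.ball (u j) (r/2) with hB
  refine ⟨disjointed B, fun j => MeasurableSet.disjointed
    (fun i => Metric.isOpen_ball.measurableSet) j, disjoint_disjointed B, ?_, ?_⟩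
  · rw [iUnion_disjointed]
    apply Set.eq_of_subset_of_subset (Set.subset_univ _)
    intro x _
    obtain ⟨j, hj⟩ := (TopologicalSpace.denseRange_denseSeq X).exists_dist_lt (ε := r/2) x (by positivity)
    exact Set.mem_iUnion.mpr ⟨j, Metric.mem_ball.mpr hj⟩
  · intro j a ha b hb
    have ha' := disjointed_subset B j ha
    have hb' := disjointed_subset B j hb
    have := Metric.mem_ball.mp ha'
    have := Metric.mem_ball.mp hb'
    calc dist a b ≤ dist a (u j) + dist (u j) b := dist_triangle _ _ _
      _ ≤ r := by rw [dist_comm (u j) b]; linarith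

end Meas

lemma ofReal_pow_rpow (a : ℝ) (ha : 0 ≤ a) (m : ℕ) :
    ((Real.toNNReal a : ℝ≥0∞)) ^ (m:ℝ) = ENNReal.ofReal (a ^ m) := by
  rw [ENNReal.rpow_natCast, ENNReal.ofReal, ← ENNReal.coe_pow, Real.toNNReal_pow ha]

lemma const_eq (d m : ℕ) (hd : 1 ≤ d) :
    (d:ℝ≥0∞) ^ ((m:ℝ)/2) = ENNReal.ofReal (Real.sqrt d ^ m) := by
  have hd0 : (0:ℝ) < d := by exact_mod_cast hd
  rw [← ENNReal.ofReal_natCast d, ENNReal.ofReal_rpow_of_pos hd0]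
  congr 1
  rw [show (m:ℝ)/2 = (1/2) * m by ring, Real.rpow_mul (le_of_lt hd0), Real.rpow_natCast,
    ← Real.sqrt_eq_rpow]

lemma part2 (n d : ℕ) (hd : 1 ≤ d) (m : ℕ)
    (Z : Set (EuclideanSpace ℝ (Fin (n + 1) × Fin (n + 1))))
    (hZ : Z ⊆ RPE (Fin (n + 1)))
    (hman : ∀ x ∈ Z, ∃ (U : Set (EuclideanSpace ℝ (Fin (n + 1) × Fin (n + 1))))
      (V : Set (EuclideanSpace ℝ (Fin m)))
      (f : EuclideanSpace ℝ (Fin m) → EuclideanSpace ℝ (Fin (n + 1) × Fin (n + 1)))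
      (g : EuclideanSpace ℝ (Fin (n + 1) × Fin (n + 1)) → EuclideanSpace ℝ (Fin m)),
    IsOpen U ∧ x ∈ U ∧ IsOpen V ∧ ContDiffOn ℝ (⊤ : ℕ∞) f V ∧
    (∀ y ∈ V, Function.Injective (fderiv ℝ f y)) ∧
    Z ∩ U = f '' V ∧ ContinuousOn g (Z ∩ U) ∧ ∀ y ∈ V, g (f y) = y) :
    μH[(m : ℝ)] (vImage n d Z) = (d : ℝ≥0∞) ^ ((m : ℝ) / 2) * μH[(m : ℝ)] Z := by
  have hm0 : (0:ℝ) ≤ (m:ℝ) := by positivity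
  -- the image is the image under kvPhi
  have himg : vImage n d Z = kvPhi n d '' Z := by
    ext M
    constructor
    · rintro ⟨x, hx1, hxZ, rfl⟩
      exact ⟨outer x, hxZ, kvPhi_outer n d hx1⟩
    · rintro ⟨P, hP, rfl⟩
      obtain ⟨x, hx1, rfl⟩ := hZ hP
      exact ⟨x, hx1, hP, kvPhi_outer n d hx1⟩
  have hZσ : IsSigmaCompact Z := isSigmaCompact_of_submanifold hman
  have hZmeas : MeasurableSet Z := hZσ.measurableSet'
  have hconts : ContinuousOn (kvPhi n d) (RPE (Fin (n+1))) :=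
    (kvPhi_lipschitzOnWith n d hd).continuousOn
  have hinjR := kvPhi_injOn n d hd
  rw [himg]
  -- upper bound
  have hupper : μH[(m:ℝ)] (kvPhi n d '' Z) ≤ ENNReal.ofReal (Real.sqrt d ^ m) * μH[(m:ℝ)] Z := by
    have := ((kvPhi_lipschitzOnWith n d hd).mono hZ).hausdorffMeasure_image_le hm0
    rwa [ofReal_pow_rpow _ (Real.sqrt_nonneg _)] at this
  -- lower bound for each θ ∈ (0,1)
  have hθstep : ∀ θ : ℝ, 0 < θ → θ < 1 →
      ENNReal.ofReal (Real.sqrt ((d:ℝ) * θ ^ (d-1)) ^ m) * μH[(m:ℝ)] Z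
        ≤ μH[(m:ℝ)] (kvPhi n d '' Z) := by
    intro θ hθ0 hθ1
    set q : ℝ := Real.sqrt ((d:ℝ) * θ ^ (d-1)) with hqdef
    have hq : 0 < q := Real.sqrt_pos.mpr (by positivity)
    have hr : (0:ℝ) < Real.sqrt (2*(1-θ)) := Real.sqrt_pos.mpr (by linarith)
    obtain ⟨Q, hQmeas, hQdis, hQuniv, hQdiam⟩ :=
      exists_partition (X := EuclideanSpace ℝ (Fin (n+1) × Fin (n+1))) hr
    set P : ℕ → Set (EuclideanSpace ℝ (Fin (n+1) × Fin (n+1))) := fun j => Z ∩ Q j with hPdef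
    have hPmeas : ∀ j, MeasurableSet (P j) := fun j => hZmeas.inter (hQmeas j)
    have hPdis : Pairwise (Function.onFun Disjoint P) := fun i j hij =>
      ((hQdis hij).mono Set.inter_subset_right Set.inter_subset_right)
    have hPunion : (⋃ j, P j) = Z := by
      rw [hPdef, ← Set.inter_iUnion, hQuniv, Set.inter_univ]
    have hPZ : ∀ j, P j ⊆ Z := fun j => Set.inter_subset_left
    have hPR : ∀ j, P j ⊆ RPE (Fin (n+1)) := fun j => (hPZ j).trans hZ
    have hImeas : ∀ j, MeasurableSet (kvPhi n d '' P j) := fun j =>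
      (hPmeas j).image_of_continuousOn_injOn (hconts.mono (hPR j)) (hinjR.mono (hPR j))
    have hIdis : Pairwise (Function.onFun Disjoint fun j => kvPhi n d '' P j) := by
      intro i j hij
      apply Set.disjoint_left.mpr
      rintro y ⟨a, ha, rfl⟩ ⟨b, hb, hba⟩
      have hab : b = a := hinjR (hPR j hb) (hPR i ha) hba
      exact Set.disjoint_left.mp (hPdis hij) ha (hab ▸ hb)
    have hBsum : μH[(m:ℝ)] Z = ∑' j, μH[(m:ℝ)] (P j) := by
      rw [← hPunion, measure_iUnion hPdis hPmeas]
    have hAsum : μH[(m:ℝ)] (kvPhi n d '' Z) = ∑' j, μH[(m:ℝ)] (kvPhi n d '' P j) := by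
      rw [← hPunion, Set.image_iUnion, measure_iUnion hIdis hImeas]
    have hpiece : ∀ j, μH[(m:ℝ)] (P j)
        ≤ ENNReal.ofReal (q⁻¹ ^ m) * μH[(m:ℝ)] (kvPhi n d '' P j) := by
      intro j
      set g := Function.invFunOn (kvPhi n d) (P j) with hgdef
      have hmem : ∀ y ∈ kvPhi n d '' P j, g y ∈ P j ∧ kvPhi n d (g y) = y := by
        rintro y ⟨a, ha, rfl⟩
        exact ⟨Function.invFunOn_mem ⟨a, ha, rfl⟩, Function.invFunOn_eq ⟨a, ha, rfl⟩⟩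
      have hglip : LipschitzOnWith (Real.toNNReal (q⁻¹)) g (kvPhi n d '' P j) := by
        apply LipschitzOnWith.of_dist_le_mul
        intro y₁ hy₁ y₂ hy₂
        obtain ⟨hgy₁, hky₁⟩ := hmem y₁ hy₁
        obtain ⟨hgy₂, hky₂⟩ := hmem y₂ hy₂
        have hclose : dist (g y₁) (g y₂) ^ 2 ≤ 2 * (1 - θ) := by
          have := hQdiam j (g y₁) (hgy₁.2) (g y₂) (hgy₂.2)
          calc dist (g y₁) (g y₂) ^ 2 ≤ Real.sqrt (2*(1-θ)) ^ 2 := by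
                apply pow_le_pow_left₀ dist_nonneg this
            _ = 2*(1-θ) := Real.sq_sqrt (by linarith)
        have := kvPhi_lower n d hd hθ0 hθ1 (hPR j hgy₁) (hPR j hgy₂) hclose
        rw [hky₁, hky₂] at this
        rwa [Real.coe_toNNReal _ (by positivity)]
      have himage : g '' (kvPhi n d '' P j) = P j :=
        (hinjR.mono (hPR j)).invFunOn_image (Set.Subset.refl _)
      calc μH[(m:ℝ)] (P j) = μH[(m:ℝ)] (g '' (kvPhi n d '' P j)) := by rw [himage]
        _ ≤ ((Real.toNNReal (q⁻¹) : ℝ≥0∞)) ^ (m:ℝ) * μH[(m:ℝ)] (kvPhi n d '' P j) :=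
            hglip.hausdorffMeasure_image_le hm0
        _ = ENNReal.ofReal (q⁻¹ ^ m) * μH[(m:ℝ)] (kvPhi n d '' P j) := by
            rw [ofReal_pow_rpow _ (by positivity)]
    have hBle : μH[(m:ℝ)] Z ≤ ENNReal.ofReal (q⁻¹ ^ m) * μH[(m:ℝ)] (kvPhi n d '' Z) := by
      rw [hBsum, hAsum, ← ENNReal.tsum_mul_left]
      exact ENNReal.tsum_le_tsum hpiece
    calc ENNReal.ofReal (q ^ m) * μH[(m:ℝ)] Z
        ≤ ENNReal.ofReal (q ^ m) * (ENNReal.ofReal (q⁻¹ ^ m) * μH[(m:ℝ)] (kvPhi n d '' Z)) :=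
          mul_le_mul_right hBle _
      _ = ENNReal.ofReal (q ^ m * q⁻¹ ^ m) * μH[(m:ℝ)] (kvPhi n d '' Z) := by
          rw [← mul_assoc, ← ENNReal.ofReal_mul (by positivity)]
      _ = μH[(m:ℝ)] (kvPhi n d '' Z) := by
          rw [← mul_pow, mul_inv_cancel₀ (ne_of_gt hq), one_pow, ENNReal.ofReal_one, one_mul]
  -- take θ → 1
  have hlower : (d:ℝ≥0∞) ^ ((m:ℝ)/2) * μH[(m:ℝ)] Z ≤ μH[(m:ℝ)] (kvPhi n d '' Z) := by
    set θk : ℕ → ℝ := fun k => 1 - ((k:ℝ)+2)⁻¹ with hθkdef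
    have hθk0 : ∀ k, 0 < θk k := by
      intro k
      have h2 : (0:ℝ) < (k:ℝ) + 2 := by positivity
      have : ((k:ℝ)+2)⁻¹ ≤ (2:ℝ)⁻¹ := by
        apply inv_anti₀ (by norm_num)
        have : (0:ℝ) ≤ (k:ℝ) := by positivity
        linarith
      simp only [hθkdef]
      norm_num
      linarith
    have hθk1 : ∀ k, θk k < 1 := by
      intro k
      have h2 : (0:ℝ) < ((k:ℝ) + 2)⁻¹ := by positivity
      simp only [hθkdef]
      linarith
    have htendθ : Filter.Tendsto θk Filter.atTop (nhds 1) := by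
      have h1 : Filter.Tendsto (fun k : ℕ => ((k:ℝ)+2)) Filter.atTop Filter.atTop :=
        Filter.tendsto_atTop_add_const_right _ 2 tendsto_natCast_atTop_atTop
      have h2 : Filter.Tendsto (fun k : ℕ => ((k:ℝ)+2)⁻¹) Filter.atTop (nhds 0) :=
        h1.inv_tendsto_atTop
      have := Filter.Tendsto.sub (tendsto_const_nhds (x := (1:ℝ))) h2
      simpa using this
    have hcont : Continuous (fun θ : ℝ => ENNReal.ofReal (Real.sqrt ((d:ℝ) * θ ^ (d-1)) ^ m)) := by
      apply ENNReal.continuous_ofReal.comp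
      exact ((Real.continuous_sqrt.comp (continuous_const.mul (continuous_pow (d-1)))).pow m)
    have htend : Filter.Tendsto
        (fun k => ENNReal.ofReal (Real.sqrt ((d:ℝ) * (θk k) ^ (d-1)) ^ m) * μH[(m:ℝ)] Z)
        Filter.atTop (nhds ((d:ℝ≥0∞) ^ ((m:ℝ)/2) * μH[(m:ℝ)] Z)) := by
      have h1 := (hcont.tendsto 1).comp htendθ
      have hval : ENNReal.ofReal (Real.sqrt ((d:ℝ) * (1:ℝ) ^ (d-1)) ^ m)
          = (d:ℝ≥0∞) ^ ((m:ℝ)/2) := by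
        rw [one_pow, mul_one, ← const_eq d m hd]
      rw [← hval]
      apply ENNReal.Tendsto.mul_const h1
      left
      rw [hval]
      have hd0 : (0:ℝ≥0∞) < (d:ℝ≥0∞) ^ ((m:ℝ)/2) := by
        apply ENNReal.rpow_pos
        · exact_mod_cast Nat.lt_of_lt_of_le Nat.zero_lt_one hd
        · exact ENNReal.natCast_ne_top d
      exact ne_of_gt hd0
    exact le_of_tendsto htend (Filter.Eventually.of_forall fun k =>
      hθstep (θk k) (hθk0 k) (hθk1 k))
  apply le_antisymm
  · rw [const_eq d m hd]
    exact hupper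
  · exact hlower

lemma vMap_deriv_norm (n d : ℕ) (x w : EuclideanSpace ℝ (Fin (n + 1)))
    (hx : ‖x‖ = 1) (hw : (∑ i, x i * w i) = 0) :
    ‖fderiv ℝ (vMap n d) x w‖ = Real.sqrt d * ‖w‖ := by
  set c : ℝ := ∑ i, w i * w i with hcdef
  have hcnn : 0 ≤ c := Finset.sum_nonneg fun i _ => mul_self_nonneg _
  have hc : Real.sqrt c = ‖w‖ := sum_self_eq_norm w
  have hx2 : (∑ i, x i * x i) = 1 := by
    have := sum_self_eq_norm x
    rw [hx] at this
    exact (Real.sqrt_eq_one.mp this)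
  set F : ℝ → EuclideanSpace ℝ (kIdx (n+1) d) := fun t => vMap n d (x + t • w) with hF
  set D : EuclideanSpace ℝ (kIdx (n+1) d) := fderiv ℝ (vMap n d) x w with hD
  have hline : ∀ t : ℝ, HasDerivAt (fun t : ℝ => x + t • w) w t := by
    intro t
    simpa using ((hasDerivAt_id t).smul_const w).const_add x
  have hF0 : ∀ t : ℝ, HasDerivAt F (fderiv ℝ (vMap n d) (x + t • w) w) t := by
    intro t
    exact ((vMap_differentiable n d (x + t • w)).hasFDerivAt).comp_hasDerivAt t (hline t)
  have hFD : HasDerivAt F D 0 := by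
    have := hF0 0
    simpa using this
  have hFα : ∀ α : kIdx (n+1) d, HasDerivAt (fun t => F t α) (D α) 0 := by
    intro α
    exact (EuclideanSpace.proj (𝕜 := ℝ) α).hasFDerivAt.comp_hasDerivAt 0 hFD
  have key : ∀ t s : ℝ, (∑ α : kIdx (n+1) d, F t α * F s α) = (1 + (t*s)*c) ^ d := by
    intro t s
    rw [hF]
    simp only []
    rw [vMap_inner n d]
    congr 1
    have happ : ∀ (u : EuclideanSpace ℝ (Fin (n+1))) (r : ℝ) i, (x + r • u) i = x i + r * u i := by
      intro u r i; rfl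
    calc (∑ i, (x + t • w) i * (x + s • w) i)
        = ∑ i, (x i * x i + (t+s) * (x i * w i) + (t*s) * (w i * w i)) := by
          apply Finset.sum_congr rfl; intro i _; rw [happ, happ]; ring
      _ = (∑ i, x i * x i) + (t+s) * (∑ i, x i * w i) + (t*s) * (∑ i, w i * w i) := by
          rw [Finset.sum_add_distrib, Finset.mul_sum, Finset.mul_sum, Finset.sum_add_distrib]
      _ = 1 + (t*s)*c := by rw [hx2, hw, mul_zero, add_zero, ← hcdef]
  -- step 1: for all s, ∑ α, D α * F s α = d * (s * c)
  have step1 : ∀ s : ℝ, (∑ α : kIdx (n+1) d, D α * F s α) = d * (s * c) := by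
    intro s
    have h1 : HasDerivAt (fun t => ∑ α : kIdx (n+1) d, F t α * F s α)
        (∑ α : kIdx (n+1) d, D α * F s α) 0 :=
      HasDerivAt.fun_sum fun α _ => (hFα α).mul_const (F s α)
    have h2 : HasDerivAt (fun t : ℝ => (1 + (t*s)*c) ^ d)
        ((d : ℝ) * (1 + (0*s)*c) ^ (d-1) * (s*c)) 0 := by
      have hin : HasDerivAt (fun t : ℝ => 1 + (t*s)*c) (s*c) 0 := by
        simpa [mul_assoc] using (((hasDerivAt_id (0:ℝ)).mul_const s).mul_const c).const_add 1
      exact hin.pow d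
    have heq : (fun t => ∑ α : kIdx (n+1) d, F t α * F s α)
        = fun t : ℝ => (1 + (t*s)*c) ^ d := funext fun t => key t s
    rw [heq] at h1
    have := h1.unique h2
    rw [this]
    simp [mul_assoc]
  -- step 2
  have h1 : HasDerivAt (fun s => ∑ α : kIdx (n+1) d, D α * F s α)
      (∑ α : kIdx (n+1) d, D α * D α) 0 :=
    HasDerivAt.fun_sum fun α _ => (hFα α).const_mul (D α)
  have h2 : HasDerivAt (fun s : ℝ => (d : ℝ) * (s * c)) ((d : ℝ) * c) 0 := by
    simpa using ((hasDerivAt_id (0:ℝ)).mul_const c).const_mul (d : ℝ)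
  rw [funext step1] at h1
  have hDD : (∑ α : kIdx (n+1) d, D α * D α) = (d : ℝ) * c := h1.unique h2
  rw [EuclideanSpace.norm_eq]
  have : (∑ α : kIdx (n+1) d, ‖D α‖ ^ 2) = (d:ℝ) * c := by
    rw [← hDD]; exact Finset.sum_congr rfl fun α _ => by rw [Real.norm_eq_abs, sq_abs, sq]
  rw [this, Real.sqrt_mul (by positivity), hc]


/-- **The Kostlan–Veronese embedding is a dilation of factor `√d`.**  Its differential
multiplies the length of every tangent vector of `ℝPⁿ` by `√d` (equivalently, on the
sphere lifts: for every unit `x` and every `w ⊥ x`, `‖D_x ν (w)‖ = √d ‖w‖`); consequently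
it multiplies the `m`-dimensional volume of every `m`-dimensional submanifold `Z ⊆ ℝPⁿ`
by `d^{m/2}`. -/
theorem kostlan_veronese_dilation (n d : ℕ) (hd : 1 ≤ d) :
    (∀ x w : EuclideanSpace ℝ (Fin (n + 1)), ‖x‖ = 1 → (∑ i, x i * w i) = 0 →
      ‖fderiv ℝ (vMap n d) x w‖ = Real.sqrt d * ‖w‖) ∧
    (∀ (m : ℕ) (Z : Set (EuclideanSpace ℝ (Fin (n + 1) × Fin (n + 1)))),
      Z ⊆ RPE (Fin (n + 1)) → IsSubmanifoldDim Z m →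
      μH[(m : ℝ)] (vImage n d Z) = (d : ℝ≥0∞) ^ ((m : ℝ) / 2) * μH[(m : ℝ)] Z) := by
  constructor
  · intro x w hx hw
    exact vMap_deriv_norm n d x w hx hw
  · intro m Z hZR hsub
    exact part2 n d hd m Z hZR hsub
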